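/- (Correctness of the LA-Prune strategy.) Let ≺ be a strict linear order on I that is ascending in mu (i.e., i ≺ j implies mu(i) ≤ mu(j)), X a nonempty itemset, and y an item with x ≺ y for every x ∈ X. If (X.IU + X.RU) − ∑_{T∈D : X⊆T and y∉T} (u(X,T) + ru(X,T)) < MIU(X), then no extension Y of X containing y (i.e., X ∪ {y} ⊆ Y with every j ∈ Y \ X satisfying x ≺ j for all x ∈ X) is an HUI: u(Y) < MIU(Y). -/

import Mathlib

open Finset

variable {ι τ : Type*}

/-- Utility of item `i` in transaction `t`: quantity times unit profit. -/
def itemU (pr : ι → ℝ) (q : ι → τ → ℕ) (i : ι) (t : τ) : ℝ :=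
  (q i t : ℝ) * pr i

/-- Utility of itemset `X` in transaction `t`. -/
def setU (pr : ι → ℝ) (q : ι → τ → ℕ) (X : Finset ι) (t : τ) : ℝ :=
  ∑ i ∈ X, itemU pr q i t

/-- Transaction utility of transaction `t` (with item set `Tr t`). -/
def tu (pr : ι → ℝ) (q : ι → τ → ℕ) (Tr : τ → Finset ι) (t : τ) : ℝ :=
  ∑ i ∈ Tr t, itemU pr q i t

/-- Transaction-weighted utility of itemset `X` in database `D`. -/
def TWU [DecidableEq ι] (pr : ι → ℝ) (q : ι → τ → ℕ) (Tr : τ → Finset ι)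
    (D : Finset τ) (X : Finset ι) : ℝ :=
  ∑ t ∈ D.filter (fun t => X ⊆ Tr t), tu pr q Tr t

/-- Utility of itemset `X` in database `D`. -/
def dbU [DecidableEq ι] (pr : ι → ℝ) (q : ι → τ → ℕ) (Tr : τ → Finset ι)
    (D : Finset τ) (X : Finset ι) : ℝ :=
  ∑ t ∈ D.filter (fun t => X ⊆ Tr t), setU pr q X t

/-- Minimum itemset utility of a nonempty itemset `X`. -/
def MIU (mu : ι → ℝ) (X : Finset ι) (hX : X.Nonempty) : ℝ :=
  X.inf' hX mu

/-- Remaining utility of itemset `X` in transaction `t`: total utility of the items of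
`Tr t` that come strictly after every item of `X`. -/
def ru [LinearOrder ι] (pr : ι → ℝ) (q : ι → τ → ℕ) (Tr : τ → Finset ι)
    (X : Finset ι) (t : τ) : ℝ :=
  ∑ i ∈ (Tr t).filter (fun i => ∀ x ∈ X, x < i), itemU pr q i t

/-- Sum of the remaining utilities of itemset `X` over the database `D` (`X.RU`). -/
def dbRU [LinearOrder ι] (pr : ι → ℝ) (q : ι → τ → ℕ) (Tr : τ → Finset ι)
    (D : Finset τ) (X : Finset ι) : ℝ :=
  ∑ t ∈ D.filter (fun t => X ⊆ Tr t), ru pr q Tr X t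

/-
Pruning on `y` only loses the transactions that miss `y`. In a transaction containing an extension
`Y ⊇ X ∪ {y}`, the items of `Y \ X` all come after `X`, so `u(Y,T) ≤ u(X,T) + ru(X,T)`; summing over
the transactions containing `Y`, all of which contain `X` and `y`, bounds `u(Y)` by exactly the
left-hand side of the pruning condition. Since `mu` is monotone along `≺` and every new item lies
above `X`, `MIU(X) ≤ MIU(Y)`.
-/

theorem itemU_nonneg {pr : ι → ℝ} (q : ι → τ → ℕ) (hpr : ∀ i, 0 ≤ pr i) (i : ι) (t : τ) :
    0 ≤ itemU pr q i t :=
  mul_nonneg (Nat.cast_nonneg _) (hpr i)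

section Utility

variable [LinearOrder ι] {pr : ι → ℝ} (q : ι → τ → ℕ) (Tr : τ → Finset ι)

theorem setU_add_ru_nonneg (hpr : ∀ i, 0 ≤ pr i) (X : Finset ι) (t : τ) :
    0 ≤ setU pr q X t + ru pr q Tr X t :=
  add_nonneg (sum_nonneg fun i _ => itemU_nonneg q hpr i t)
    (sum_nonneg fun i _ => itemU_nonneg q hpr i t)

theorem setU_le_setU_add_ru (hpr : ∀ i, 0 ≤ pr i) {X Y : Finset ι} (hXY : X ⊆ Y)
    (hext : ∀ j ∈ Y \ X, ∀ x ∈ X, x < j) {t : τ} (hYt : Y ⊆ Tr t) :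
    setU pr q Y t ≤ setU pr q X t + ru pr q Tr X t := by
  have hsplit : setU pr q Y t = setU pr q X t + ∑ i ∈ Y \ X, itemU pr q i t := by
    rw [setU, setU, ← sum_union disjoint_sdiff, union_sdiff_of_subset hXY]
  rw [hsplit, ru]
  refine add_le_add_right (sum_le_sum_of_subset_of_nonneg (fun i hi => ?_)
    fun i _ _ => itemU_nonneg q hpr i t) _
  exact mem_filter.mpr ⟨hYt (sdiff_subset hi), hext i hi⟩

theorem dbU_le_sum_setU_add_ru (hpr : ∀ i, 0 ≤ pr i) (D : Finset τ) {X Y : Finset ι} {y : ι}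
    (hXY : X ⊆ Y) (hyY : y ∈ Y) (hext : ∀ j ∈ Y \ X, ∀ x ∈ X, x < j) :
    dbU pr q Tr D Y ≤
      ∑ t ∈ D.filter (fun t => X ⊆ Tr t ∧ y ∈ Tr t), (setU pr q X t + ru pr q Tr X t) :=
  calc dbU pr q Tr D Y
      ≤ ∑ t ∈ D.filter (fun t => Y ⊆ Tr t), (setU pr q X t + ru pr q Tr X t) :=
        sum_le_sum fun t ht => setU_le_setU_add_ru q Tr hpr hXY hext (mem_filter.mp ht).2
    _ ≤ _ := by
        refine sum_le_sum_of_subset_of_nonneg (fun t ht => ?_)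
          fun t _ _ => setU_add_ru_nonneg q Tr hpr X t
        obtain ⟨htD, hYt⟩ := mem_filter.mp ht
        exact mem_filter.mpr ⟨htD, hXY.trans hYt, hYt hyY⟩

theorem dbU_add_dbRU_sub_sum_notMem (D : Finset τ) (X : Finset ι) (y : ι) :
    dbU pr q Tr D X + dbRU pr q Tr D X -
        ∑ t ∈ D.filter (fun t => X ⊆ Tr t ∧ y ∉ Tr t), (setU pr q X t + ru pr q Tr X t) =
      ∑ t ∈ D.filter (fun t => X ⊆ Tr t ∧ y ∈ Tr t), (setU pr q X t + ru pr q Tr X t) := by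
  rw [dbU, dbRU, ← sum_add_distrib, sub_eq_iff_eq_add,
    ← sum_filter_add_sum_filter_not (D.filter fun t => X ⊆ Tr t) (fun t => y ∈ Tr t),
    filter_filter, filter_filter]

end Utility

theorem MIU_le_MIU_of_forall_lt [LinearOrder ι] {mu : ι → ℝ} (hmono : Monotone mu)
    {X Y : Finset ι} (hX : X.Nonempty) (hXY : X ⊆ Y) (hext : ∀ j ∈ Y \ X, ∀ x ∈ X, x < j) :
    MIU mu X hX ≤ MIU mu Y (hX.mono hXY) := by
  refine le_inf' _ _ fun j hjY => ?_
  by_cases hjX : j ∈ X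
  · exact inf'_le mu hjX
  · obtain ⟨x, hx⟩ := hX
    exact (inf'_le mu hx).trans (hmono (hext j (mem_sdiff.mpr ⟨hjY, hjX⟩) x hx).le)

theorem LA_prune_correct_general [LinearOrder ι] (I : Finset ι) (pr mu : ι → ℝ)
    (hpr : ∀ i, 0 ≤ pr i)
    (hasc : ∀ i j : ι, i < j → mu i ≤ mu j)
    (D : Finset τ) (Tr : τ → Finset ι) (q : ι → τ → ℕ)
    (X : Finset ι) (hX : X.Nonempty)
    (y : ι)
    (hprune : (dbU pr q Tr D X + dbRU pr q Tr D X) -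
      ∑ t ∈ D.filter (fun t => X ⊆ Tr t ∧ y ∉ Tr t),
        (setU pr q X t + ru pr q Tr X t) < MIU mu X hX) :
    ∀ (Y : Finset ι) (hXY : X ⊆ Y), X ∪ {y} ⊆ Y → Y ⊆ I →
      (∀ j ∈ Y \ X, ∀ x ∈ X, x < j) →
      dbU pr q Tr D Y < MIU mu Y (hX.mono hXY) := by
  intro Y hXY hXyY _ hext
  have hyY : y ∈ Y := hXyY (mem_union_right X (mem_singleton_self y))
  have hmono : Monotone mu := monotone_iff_forall_lt.mpr fun i j => hasc i j
  rw [dbU_add_dbRU_sub_sum_notMem] at hprune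
  calc dbU pr q Tr D Y
      ≤ ∑ t ∈ D.filter (fun t => X ⊆ Tr t ∧ y ∈ Tr t), (setU pr q X t + ru pr q Tr X t) :=
        dbU_le_sum_setU_add_ru q Tr hpr D hXY hyY hext
    _ < MIU mu X hX := hprune
    _ ≤ MIU mu Y (hX.mono hXY) := MIU_le_MIU_of_forall_lt hmono hX hXY hext

/-- correctness of the LA-Prune strategy. If
`(X.IU + X.RU) - ∑_{t ∈ D, X ⊆ t, y ∉ t} (u(X,t) + ru(X,t)) < MIU(X)`, then no extension
of `X` containing `y` is an HUI. -/
theorem LA_prune_correct [LinearOrder ι] (I : Finset ι) (pr mu : ι → ℝ)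
    (hpr : ∀ i, 0 ≤ pr i) (hmu : ∀ i, 0 < mu i)
    (hasc : ∀ i j : ι, i < j → mu i ≤ mu j)
    (D : Finset τ) (Tr : τ → Finset ι) (q : ι → τ → ℕ)
    (hq : ∀ t ∈ D, ∀ i ∈ Tr t, 0 < q i t) (hTr : ∀ t ∈ D, Tr t ⊆ I)
    (X : Finset ι) (hX : X.Nonempty) (hXI : X ⊆ I)
    (y : ι) (hyI : y ∈ I) (hy : ∀ x ∈ X, x < y)
    (hprune : (dbU pr q Tr D X + dbRU pr q Tr D X) -
      ∑ t ∈ D.filter (fun t => X ⊆ Tr t ∧ y ∉ Tr t),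
        (setU pr q X t + ru pr q Tr X t) < MIU mu X hX) :
    ∀ (Y : Finset ι) (hXY : X ⊆ Y), X ∪ {y} ⊆ Y → Y ⊆ I →
      (∀ j ∈ Y \ X, ∀ x ∈ X, x < j) →
      dbU pr q Tr D Y < MIU mu Y (hX.mono hXY) :=
  LA_prune_correct_general I pr mu hpr hasc D Tr q X hX y hprune
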